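/- If n_l < n_u, then the search space graph is connected: for any two states s, s' in S there is a walk in G from s to s'. -/

import Mathlib

/-- Hamming weight of a binary string: number of coordinates equal to `true`. -/
def HW {N : ℕ} (s : Fin N → Bool) : ℕ :=
  (Finset.univ.filter fun i => s i = true).card

/-- The search space: binary strings of length `N` with Hamming weight in `[nl, nu]`. -/
def searchSpace (N nl nu : ℕ) : Finset (Fin N → Bool) :=
  Finset.univ.filter fun s => nl ≤ HW s ∧ HW s ≤ nu

/-- The search space graph: vertices are the states in the search space, with an edge
between two states iff their Hamming distance is 1. -/
def SearchGraph (N nl nu : ℕ) :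
    SimpleGraph {s : Fin N → Bool // nl ≤ HW s ∧ HW s ≤ nu} where
  Adj s s' := hammingDist s.1 s'.1 = 1
  symm := ⟨fun s s' h => by simpa [hammingDist_comm] using h⟩
  loopless := ⟨fun s h => by simp at h⟩


/-!
Induct on the Hamming distance to the target `t`. From `s ≠ t`, flipping a coordinate where `s`
and `t` differ changes the weight by `±1`. Since `nl < nu`, at least one direction is allowed:
if `HW s < nu` but no coordinate can be raised, then `t < s` pointwise, so `HW s > HW t ≥ nl` and
a coordinate can be lowered; the case `nl < HW s` is symmetric.
-/

open Function

theorem SimpleGraph.preconnected_of_forall_exists_adj_lt {V : Type*} (G : SimpleGraph V)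
    (d : V → V → ℕ) (h : ∀ u v, u ≠ v → ∃ w, G.Adj u w ∧ d w v < d u v) :
    G.Preconnected := by
  intro u v
  induction u using (measure (d · v)).wf.induction with
  | h u ih =>
    by_cases huv : u = v
    · exact huv ▸ .refl u
    obtain ⟨w, huw, hw⟩ := h u v huv
    exact huw.reachable.trans (ih w hw)

section Hamming

variable {ι β : Type*} [Fintype ι] [DecidableEq ι] [DecidableEq β]

theorem hammingDist_update_self_of_ne {s : ι → β} {i : ι} {b : β} (hb : s i ≠ b) :
    hammingDist s (update s i b) = 1 := by
  rw [hammingDist, Finset.card_eq_one]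
  refine ⟨i, Finset.ext fun j => ?_⟩
  by_cases hj : j = i <;> simp [hj, hb]

theorem hammingDist_update_add_one_of_ne {s t : ι → β} {i : ι} (hi : s i ≠ t i) :
    hammingDist (update s i (t i)) t + 1 = hammingDist s t := by
  have hfilter :
      ({j | update s i (t i) j ≠ t j} : Finset ι) = ({j | s j ≠ t j} : Finset ι).erase i := by
    ext j
    by_cases hj : j = i <;> simp [hj]
  rw [hammingDist, hammingDist, hfilter, Finset.card_erase_add_one (by simpa using hi)]

end Hamming

section Weight

variable {N : ℕ}

theorem HW_strictMono : StrictMono (HW : (Fin N → Bool) → ℕ) := by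
  intro s t hst
  obtain ⟨hle, i, hi⟩ := Pi.lt_def.1 hst
  apply Finset.card_lt_card
  have hsub : ({j | s j = true} : Finset (Fin N)) ⊆ ({j | t j = true} : Finset _) :=
    fun j hj => by simpa using Bool.le_iff_imp.1 (hle j) (by simpa using hj)
  rw [Finset.ssubset_iff_of_subset hsub]
  exact ⟨i, by simp [(Bool.lt_iff.1 hi).2], by simp [(Bool.lt_iff.1 hi).1]⟩

theorem HW_update_of_lt {s : Fin N → Bool} {i : Fin N} {b : Bool} (h : s i < b) :
    HW (update s i b) = HW s + 1 := by
  obtain ⟨hsi, rfl⟩ := Bool.lt_iff.1 h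
  have hfilter : ({j | update s i true j = true} : Finset (Fin N)) =
      insert i ({j | s j = true} : Finset _) := by
    ext j
    by_cases hj : j = i <;> simp [hj]
  rw [HW, HW, hfilter, Finset.card_insert_of_notMem (by simp [hsi])]

theorem HW_update_add_one_of_lt {s : Fin N → Bool} {i : Fin N} {b : Bool} (h : b < s i) :
    HW (update s i b) + 1 = HW s := by
  obtain ⟨rfl, hsi⟩ := Bool.lt_iff.1 h
  have hfilter :
      ({j | update s i false j = true} : Finset (Fin N)) = Finset.erase {j | s j = true} i := by
    ext j
    by_cases hj : j = i <;> simp [hj]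
  rw [HW, HW, hfilter, Finset.card_erase_add_one (by simp [hsi])]

theorem exists_raise_or_lower {nl nu : ℕ} (hlu : nl < nu) {s t : Fin N → Bool}
    (ht : nl ≤ HW t ∧ HW t ≤ nu) (hne : s ≠ t) :
    ∃ i, s i < t i ∧ HW s < nu ∨ t i < s i ∧ nl < HW s := by
  rcases lt_or_ge (HW s) nu with hlt | hge
  · by_cases hts : t ≤ s
    · have hts' := lt_of_le_of_ne hts hne.symm
      obtain ⟨i, hi⟩ := (Pi.lt_def.1 hts').2
      exact ⟨i, .inr ⟨hi, ht.1.trans_lt (HW_strictMono hts')⟩⟩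
    · obtain ⟨i, hi⟩ : ∃ i, s i < t i := by simpa [Pi.le_def] using hts
      exact ⟨i, .inl ⟨hi, hlt⟩⟩
  · by_cases hst : s ≤ t
    · have hst' := lt_of_le_of_ne hst hne
      obtain ⟨i, hi⟩ := (Pi.lt_def.1 hst').2
      exact ⟨i, .inl ⟨hi, (HW_strictMono hst').trans_le ht.2⟩⟩
    · obtain ⟨i, hi⟩ : ∃ i, t i < s i := by simpa [Pi.le_def] using hst
      exact ⟨i, .inr ⟨hi, by omega⟩⟩

theorem exists_ne_HW_update_mem_of_lt {nl nu : ℕ} (hlu : nl < nu) {s t : Fin N → Bool}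
    (hs : nl ≤ HW s ∧ HW s ≤ nu) (ht : nl ≤ HW t ∧ HW t ≤ nu) (hne : s ≠ t) :
    ∃ i, s i ≠ t i ∧ nl ≤ HW (update s i (t i)) ∧ HW (update s i (t i)) ≤ nu := by
  obtain ⟨i, ⟨hi, hlt⟩ | ⟨hi, hgt⟩⟩ := exists_raise_or_lower hlu ht hne
  · exact ⟨i, hi.ne, by have := HW_update_of_lt hi; omega⟩
  · exact ⟨i, hi.ne', by have := HW_update_add_one_of_lt hi; omega⟩

end Weight

theorem searchGraph_preconnected_general (N nl nu : ℕ) (h1 : nl < nu) :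
    ∀ s s' : {s : Fin N → Bool // nl ≤ HW s ∧ HW s ≤ nu},
      (SearchGraph N nl nu).Reachable s s' := by
  refine (SearchGraph N nl nu).preconnected_of_forall_exists_adj_lt
    (fun s s' => hammingDist s.1 s'.1) fun s s' hne => ?_
  obtain ⟨i, hi, hl, hu⟩ := exists_ne_HW_update_mem_of_lt h1 s.2 s'.2 (Subtype.coe_ne_coe.2 hne)
  refine ⟨⟨update s.1 i (s'.1 i), hl, hu⟩, hammingDist_update_self_of_ne hi, ?_⟩
  have := hammingDist_update_add_one_of_ne hi
  dsimp only
  omega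

/-- If `n_l < n_u`, the search space graph is connected: any two states
are joined by a walk. -/
theorem searchGraph_preconnected (N nl nu : ℕ) (h1 : nl < nu) (h2 : nu ≤ N) :
    ∀ s s' : {s : Fin N → Bool // nl ≤ HW s ∧ HW s ≤ nu},
      (SearchGraph N nl nu).Reachable s s' :=
  searchGraph_preconnected_general N nl nu h1
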